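/- If the n×n complex matrix H is antisymmetric (Hᵀ = −H), then the 2n×2n third-quantization structure matrix A is antisymmetric: Aᵀ = −A. (Consequently its eigenvalues come in pairs β_j, −β_j.) -/
import Mathlib


open scoped Matrix

/-- The 2n×2n third-quantization structure matrix of the quadratic quantum master equation
`dρ/dt = −i[H_S, ρ] + Σ_{m,k}(M_{mk}[w_m ρ, w_k] + h.c.)` in the Majorana representation.
The pair `(m, 0)` represents the odd index `2m−1` and `(m, 1)` the even index `2m`. -/
noncomputable def structureMatrix {n : ℕ} (H M : Matrix (Fin n) (Fin n) ℂ) :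
    Matrix (Fin n × Fin 2) (Fin n × Fin 2) ℂ := fun p q =>
  if p.2 = 0 ∧ q.2 = 0 then -(2 * Complex.I) * H p.1 q.1 - M p.1 q.1 + M q.1 p.1
  else if p.2 = 1 ∧ q.2 = 1 then -(2 * Complex.I) * H p.1 q.1 + M p.1 q.1 - M q.1 p.1
  else if p.2 = 0 ∧ q.2 = 1 then Complex.I * (M q.1 p.1 + M p.1 q.1)
  else -Complex.I * (M p.1 q.1 + M q.1 p.1)

/-- if `H` is antisymmetric then the third-quantization structure matrix is
antisymmetric. -/
theorem structureMatrix_antisymmetric {n : ℕ} (H M : Matrix (Fin n) (Fin n) ℂ)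
    (hH : Hᵀ = -H) : (structureMatrix H M)ᵀ = -structureMatrix H M := by
  ext ⟨p, i⟩ ⟨q, j⟩
  have h : H q p = -H p q := by
    have := congrFun (congrFun hH p) q
    simpa [Matrix.transpose_apply] using this
  fin_cases i <;> fin_cases j <;>
    simp [structureMatrix, Matrix.transpose_apply, h] <;> ring
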